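/- (Sormani's distance-to-level-set lemma.) Let (M,d) be a proper geodesic metric space, γ a ray, and b_γ the associated Busemann function. For any real number R and any x with b_γ(x) ≤ R, the distance from x to the level set b_γ^{-1}(R) equals R − b_γ(x). -/
import Mathlib


open Filter Metric

/-- A ray in a metric space: `d(γ s, γ t) = |t - s|` for all `s, t ≥ 0`. -/
def IsRay {M : Type*} [MetricSpace M] (γ : ℝ → M) : Prop :=
  ∀ s t : ℝ, 0 ≤ s → 0 ≤ t → dist (γ s) (γ t) = |t - s|

/-- A geodesic metric space: any two points are joined by a minimizing geodesic. -/
def IsGeodesicSpace (M : Type*) [MetricSpace M] : Prop :=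
  ∀ x y : M, ∃ f : ℝ → M, f 0 = x ∧ f (dist x y) = y ∧
    ∀ s ∈ Set.Icc 0 (dist x y), ∀ t ∈ Set.Icc 0 (dist x y),
      dist (f s) (f t) = |t - s|

/-- `t - d(p, γ t)` is bounded above by the Busemann value `b p`. -/
lemma busemann_lower {M : Type*} [MetricSpace M] (γ : ℝ → M) (hγ : IsRay γ)
    (b : M → ℝ) (hb : ∀ p : M, Tendsto (fun t => t - dist p (γ t)) atTop (nhds (b p)))
    (p : M) (t : ℝ) (ht : 0 ≤ t) : t - dist p (γ t) ≤ b p := by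
  apply ge_of_tendsto (hb p)
  filter_upwards [eventually_ge_atTop t] with u hu
  have hu0 : 0 ≤ u := le_trans ht hu
  have htri : dist p (γ u) ≤ dist p (γ t) + dist (γ t) (γ u) := dist_triangle _ _ _
  have : dist (γ t) (γ u) = u - t := by
    rw [hγ t u ht hu0, abs_of_nonneg (by linarith)]
  linarith

/-- `b (γ t) = t` for `t ≥ 0`. -/
lemma busemann_ray {M : Type*} [MetricSpace M] (γ : ℝ → M) (hγ : IsRay γ)
    (b : M → ℝ) (hb : ∀ p : M, Tendsto (fun t => t - dist p (γ t)) atTop (nhds (b p)))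
    (t : ℝ) (ht : 0 ≤ t) : b (γ t) = t := by
  refine tendsto_nhds_unique (hb (γ t)) ?_
  have : ∀ᶠ u in atTop, u - dist (γ t) (γ u) = t := by
    filter_upwards [eventually_ge_atTop t] with u hu
    rw [hγ t u ht (le_trans ht hu), abs_of_nonneg (by linarith)]
    ring
  refine tendsto_const_nhds.congr' ?_
  filter_upwards [this] with u h
  exact h.symm

/-- `b` is 1-Lipschitz. -/
lemma busemann_lipschitz {M : Type*} [MetricSpace M] (γ : ℝ → M)
    (b : M → ℝ) (hb : ∀ p : M, Tendsto (fun t => t - dist p (γ t)) atTop (nhds (b p)))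
    (p q : M) : b p - b q ≤ dist p q := by
  have h : Tendsto (fun t => (t - dist p (γ t)) - (t - dist q (γ t))) atTop
      (nhds (b p - b q)) := (hb p).sub (hb q)
  apply le_of_tendsto h
  filter_upwards with u
  have := abs_dist_sub_le q p (γ u)
  rw [dist_comm q p] at this
  have := (abs_le.1 this).2
  show (_ : ℝ) - _ ≤ _
  linarith

/-- Sormani's distance-to-level-set lemma: in a proper geodesic space, for any `R` and
any `x` with `b_γ(x) ≤ R`, the distance from `x` to the level set `b_γ⁻¹(R)` equals
`R - b_γ(x)`. -/
theorem dist_to_busemann_level {M : Type*} [MetricSpace M] [ProperSpace M]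
    (hgeo : IsGeodesicSpace M) (γ : ℝ → M) (hγ : IsRay γ) (b : M → ℝ)
    (hb : ∀ p : M, Tendsto (fun t => t - dist p (γ t)) atTop (nhds (b p)))
    (R : ℝ) (x : M) (hx : b x ≤ R) :
    Metric.infDist x (b ⁻¹' {R}) = R - b x := by
  set S := b ⁻¹' {R} with hS
  -- Step 1: for every t ≥ max R 0, find a point y ∈ S with d(x,y) ≤ R - (t - d(x,γ t)).
  have key : ∀ t : ℝ, max R 0 ≤ t →
      ∃ y ∈ S, dist x y ≤ R - (t - dist x (γ t)) := by
    intro t ht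
    have ht0 : (0:ℝ) ≤ t := le_trans (le_max_right _ _) ht
    have htR : R ≤ t := le_trans (le_max_left _ _) ht
    obtain ⟨f, hf0, hfD, hiso⟩ := hgeo x (γ t)
    set D := dist x (γ t) with hD
    have hD0 : 0 ≤ D := dist_nonneg
    -- b ∘ f is continuous on [0, D]
    have hcont : ContinuousOn (b ∘ f) (Set.Icc 0 D) := by
      have hlip : LipschitzOnWith 1 (b ∘ f) (Set.Icc 0 D) := by
        intro s hs s' hs'
        rw [ENNReal.coe_one, one_mul, edist_dist, edist_dist]
        apply ENNReal.ofReal_le_ofReal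
        rw [Real.dist_eq]
        rcases abs_cases (b (f s) - b (f s')) with ⟨h1, _⟩ | ⟨h1, _⟩
        · rw [show (b ∘ f) s - (b ∘ f) s' = b (f s) - b (f s') from rfl, h1]
          calc b (f s) - b (f s') ≤ dist (f s) (f s') := busemann_lipschitz γ b hb _ _
            _ = |s' - s| := hiso s hs s' hs'
            _ = dist s s' := by rw [Real.dist_eq, abs_sub_comm]
        · rw [show (b ∘ f) s - (b ∘ f) s' = b (f s) - b (f s') from rfl, h1]
          calc -(b (f s) - b (f s')) = b (f s') - b (f s) := by ring
            _ ≤ dist (f s') (f s) := busemann_lipschitz γ b hb _ _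
            _ = |s - s'| := hiso s' hs' s hs
            _ = dist s s' := by rw [Real.dist_eq]
      exact hlip.continuousOn
    have hf0b : (b ∘ f) 0 = b x := by simp only [Function.comp_apply, hf0]
    have hfDb : (b ∘ f) D = t := by
      simp only [Function.comp_apply, hfD]
      exact busemann_ray γ hγ b hb t ht0
    have hivt : R ∈ (b ∘ f) '' Set.Icc 0 D := by
      apply intermediate_value_Icc hD0 hcont
      rw [hf0b, hfDb]
      exact ⟨hx, htR⟩
    obtain ⟨s, hs, hbs⟩ := hivt
    refine ⟨f s, by simpa [hS] using hbs, ?_⟩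
    have hdxfs : dist x (f s) = s := by
      have := hiso 0 ⟨le_refl 0, hD0⟩ s hs
      rw [hf0] at this
      rw [this, sub_zero, abs_of_nonneg hs.1]
    -- b (f s) ≥ t - dist (f s) (γ t) = t - (D - s)
    have hdfst : dist (f s) (γ t) = D - s := by
      have := hiso s hs D ⟨hD0, le_refl D⟩
      rw [hfD] at this
      rw [this, abs_of_nonneg (by linarith [hs.2])]
    have hlow : t - (D - s) ≤ b (f s) := by
      have := busemann_lower γ hγ b hb (f s) t ht0
      rwa [hdfst] at this
    have hbs' : b (f s) = R := hbs
    rw [hbs'] at hlow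
    rw [hdxfs]
    linarith
  -- nonemptiness of S
  obtain ⟨y0, hy0, _⟩ := key (max R 0) le_rfl
  have hne : S.Nonempty := ⟨y0, hy0⟩
  -- upper bound: infDist x S ≤ R - b x
  have hub : Metric.infDist x S ≤ R - b x := by
    have hev : ∀ᶠ t in atTop, Metric.infDist x S ≤ R - (t - dist x (γ t)) := by
      filter_upwards [eventually_ge_atTop (max R 0)] with t ht
      obtain ⟨y, hy, hdy⟩ := key t ht
      exact le_trans (Metric.infDist_le_dist_of_mem hy) hdy
    have : Tendsto (fun t => R - (t - dist x (γ t))) atTop (nhds (R - b x)) :=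
      tendsto_const_nhds.sub (hb x)
    exact ge_of_tendsto this hev
  -- lower bound
  have hlb : R - b x ≤ Metric.infDist x S := by
    by_contra h
    push_neg at h
    obtain ⟨y, hy, hdy⟩ := (infDist_lt_iff hne).1 h
    have hlip : b y - b x ≤ dist y x := busemann_lipschitz γ b hb y x
    have hby : b y = R := hy
    rw [dist_comm] at hlip
    linarith
  linarith
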